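/- Let A be an associative ring, M a left A-module, and R = (End_A(M))^op the opposite ring of the endomorphism ring of M, endowed with the finite topology (so M is a right R-module via evaluation). Then the right R-module ⊕_{n∈ℕ} M (with R acting componentwise) is coperfect, i.e., satisfies the descending chain condition on cyclic R-submodules, if and only if every discrete right R-module is coperfect. -/

import Mathlib

open DirectSum

universe u

/-- The finite topology on the endomorphism ring `End_A(M)` of a module `M`: the topology
induced by the inclusion `End_A(M) ⊆ (M → M)`, where `M` carries the discrete topology and
`M → M` the product topology.  (Via `op`, this is also the finite topology on the ring
`R = (End_A(M))ᵒᵖ`, whose open right ideals correspond to the open left ideals of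
`End_A(M)`, and right `R`-modules are exactly left `End_A(M)`-modules.) -/
def endFiniteTopology (A : Type*) [Ring A] (M : Type*) [AddCommGroup M] [Module A M] :
    TopologicalSpace (Module.End A M) :=
  TopologicalSpace.induced (fun f (m : M) => f m)
    (@Pi.topologicalSpace M (fun _ => M) (fun _ => ⊥))

section Aux

variable {A : Type u} [Ring A] {M : Type u} [AddCommGroup M] [Module A M]

/-- From openness of the annihilator of `n` in the finite topology, extract a finite
subset `I ⊆ M` such that any endomorphism killing `I` kills `n`. -/
lemma ann_open_finset {N : Type*} [AddCommGroup N] [Module (Module.End A M) N]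
    (n : N) (h : @IsOpen _ (endFiniteTopology A M) {e : Module.End A M | e • n = 0}) :
    ∃ I : Finset M, ∀ f : Module.End A M, (∀ m ∈ I, f m = 0) → f • n = 0 := by
  letI : TopologicalSpace M := ⊥
  haveI : DiscreteTopology M := ⟨rfl⟩
  rw [show endFiniteTopology A M =
      TopologicalSpace.induced (fun f (m : M) => f m) Pi.topologicalSpace from rfl,
    isOpen_induced_iff] at h
  obtain ⟨U, hU, hUeq⟩ := h
  have h0 : (fun (m : M) => (0 : Module.End A M) m) ∈ U := by
    have : (0 : Module.End A M) ∈ {e : Module.End A M | e • n = 0} := by simp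
    rw [← hUeq] at this
    exact this
  obtain ⟨I, u, hu, hsub⟩ := (isOpen_pi_iff.mp hU) _ h0
  refine ⟨I, fun f hf => ?_⟩
  have hf' : (fun m : M => f m) ∈ U := by
    apply hsub
    intro m hm
    have h2 := (hu m hm).2
    simpa [hf m hm] using h2
  have : f ∈ {e : Module.End A M | e • n = 0} := by
    rw [← hUeq]
    exact hf'
  exact this

/-- The annihilator of any element of `⨁ _ : ℕ, M` is open in the finite topology. -/
lemma dsAnnOpen (x : ⨁ _ : ℕ, M) :
    @IsOpen _ (endFiniteTopology A M) {e : Module.End A M | e • x = 0} := by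
  classical
  letI : TopologicalSpace M := ⊥
  haveI : DiscreteTopology M := ⟨rfl⟩
  rw [show endFiniteTopology A M =
      TopologicalSpace.induced (fun f (m : M) => f m) Pi.topologicalSpace from rfl]
  have hset : {e : Module.End A M | e • x = 0}
      = (fun f (m : M) => f m) ⁻¹'
        (⋂ i ∈ DFinsupp.support x, {g : M → M | g (x i) = 0}) := by
    ext e
    simp only [Set.mem_setOf_eq, Set.mem_preimage, Set.mem_iInter]
    constructor
    · intro he i _
      have : (e • x) i = (0 : ⨁ _ : ℕ, M) i := by rw [he]
      rw [DFinsupp.smul_apply] at this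
      exact this
    · intro he
      refine DFinsupp.ext fun i => ?_
      by_cases hi : i ∈ DFinsupp.support x
      · rw [DFinsupp.smul_apply]
        exact he i hi
      · have hxi : x i = 0 := by
          by_contra hne
          exact hi (DFinsupp.mem_support_iff.mpr hne)
        rw [DFinsupp.smul_apply, hxi, smul_zero, DFinsupp.zero_apply]
  rw [hset]
  refine isOpen_induced ?_
  refine isOpen_biInter_finset fun i _ => ?_
  have : {g : M → M | g (x i) = 0} = (fun g : M → M => g (x i)) ⁻¹' {0} := rfl
  rw [this]
  exact IsOpen.preimage (continuous_apply (x i)) (isOpen_discrete _)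

end Aux

/-- Let `A` be a ring, `M` a left `A`-module, and `R = (End_A(M))ᵒᵖ` its endomorphism ring
with the finite topology, so that `M` is a right `R`-module (i.e. a left `End_A(M)`-module)
via evaluation.  Then the right `R`-module `⊕_{n ∈ ℕ} M` (with `R` acting componentwise) is
coperfect — satisfies the descending chain condition on cyclic submodules — if and only if
every discrete right `R`-module (every left `End_A(M)`-module in which the annihilator of
each element is open in the finite topology) is coperfect. -/
theorem stmt_19 {A : Type u} [Ring A] {M : Type u} [AddCommGroup M] [Module A M] :
    (∀ c : ℕ → Submodule (Module.End A M) (⨁ _ : ℕ, M),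
      (∀ k, ∃ x, c k = Submodule.span (Module.End A M) {x}) →
      (∀ k, c (k + 1) ≤ c k) → ∃ k, ∀ l, k ≤ l → c l = c k) ↔
    (∀ (N : Type u) [AddCommGroup N] [Module (Module.End A M) N],
      (∀ n : N, @IsOpen _ (endFiniteTopology A M) {e : Module.End A M | e • n = 0}) →
      ∀ c : ℕ → Submodule (Module.End A M) N,
        (∀ k, ∃ x, c k = Submodule.span (Module.End A M) {x}) →
        (∀ k, c (k + 1) ≤ c k) → ∃ k, ∀ l, k ≤ l → c l = c k) := by
  classical
  constructor
  · -- hard direction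
    intro h N _ _ hdisc c hcyc hdesc
    -- choose generators
    choose x hx using hcyc
    -- choose connecting endomorphisms
    have hmem : ∀ k, x (k + 1) ∈ Submodule.span (Module.End A M) {x k} := by
      intro k
      rw [← hx k]
      exact hdesc k (by rw [hx (k + 1)]; exact Submodule.mem_span_singleton_self _)
    choose e he using fun k => Submodule.mem_span_singleton.mp (hmem k)
    -- finite subset controlling the annihilator of x 0
    obtain ⟨I, hI⟩ := ann_open_finset (x 0) (hdisc (x 0))
    -- build the element y0 of the direct sum listing the elements of I
    set L : List M := I.toList with hL
    set y0 : ⨁ _ : ℕ, M :=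
      DFinsupp.mk (Finset.range L.length) (fun j => L.getD j.1 0) with hy0
    have hy0_apply : ∀ j (hj : j < L.length), y0 j = L.getD j 0 := by
      intro j hj
      rw [hy0, DFinsupp.mk_apply]
      simp [hj]
    have hy0_mem : ∀ m ∈ I, ∃ j, ∃ hj : j < L.length, y0 j = m := by
      intro m hm
      have : m ∈ L := by rw [hL]; exact Finset.mem_toList.mpr hm
      obtain ⟨j, hj, hjm⟩ := List.mem_iff_getElem.mp this
      exact ⟨j, hj, by rw [hy0_apply j hj, List.getD_eq_getElem L 0 hj, hjm]⟩
    -- key: any endomorphism killing y0 kills x 0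
    have hkey : ∀ w : Module.End A M, w • y0 = 0 → w • x 0 = 0 := by
      intro w hw
      apply hI
      intro m hm
      obtain ⟨j, hj, hjm⟩ := hy0_mem m hm
      have : (w • y0) j = (0 : ⨁ _ : ℕ, M) j := by rw [hw]
      rw [DFinsupp.smul_apply, hjm, DFinsupp.zero_apply] at this
      exact this
    -- composite endomorphisms
    set g : ℕ → Module.End A M := fun k => Nat.rec 1 (fun k gk => e k * gk) k with hg
    have hg0 : g 0 = 1 := rfl
    have hgs : ∀ k, g (k + 1) = e k * g k := fun k => rfl
    have hgx : ∀ k, g k • x 0 = x k := by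
      intro k
      induction k with
      | zero => rw [hg0, one_smul]
      | succ k ih => rw [hgs, mul_smul, ih, he k]
    -- descending chain of cyclic submodules of the direct sum
    set d : ℕ → Submodule (Module.End A M) (⨁ _ : ℕ, M) :=
      fun k => Submodule.span (Module.End A M) {g k • y0} with hd
    obtain ⟨k, hk⟩ := h d (fun k => ⟨g k • y0, rfl⟩) (by
      intro k
      rw [hd]
      refine Submodule.span_le.mpr ?_
      rw [Set.singleton_subset_iff]
      exact Submodule.mem_span_singleton.mpr ⟨e k, by rw [← mul_smul, ← hgs]⟩)
    refine ⟨k, fun l hl => ?_⟩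
    induction l, hl using Nat.le_induction with
    | base => rfl
    | succ l hl ih =>
      -- show c (l+1) = c l, using stabilization of d
      have hdl : d l = d (l + 1) := by
        rw [hk l hl, hk (l + 1) (Nat.le_succ_of_le hl)]
      have : g l • y0 ∈ d (l + 1) := by
        rw [← hdl]
        exact Submodule.mem_span_singleton_self _
      obtain ⟨f, hf⟩ := Submodule.mem_span_singleton.mp this
      -- w kills y0
      have hw : (g l - f * g (l + 1)) • y0 = 0 := by
        rw [sub_smul, mul_smul, hf, sub_self]
      have hwx := hkey _ hw
      rw [sub_smul, sub_eq_zero] at hwx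
      -- hwx : g l • x 0 = (f * g (l + 1)) • x 0
      have hfx : f • x (l + 1) = x l := by
        rw [← hgx (l + 1), ← mul_smul, ← hwx, hgx]
      -- so x l ∈ c (l+1)
      have hxl : x l ∈ c (l + 1) := by
        rw [hx (l + 1)]
        exact Submodule.mem_span_singleton.mpr ⟨f, hfx⟩
      have hle : c l ≤ c (l + 1) := by
        rw [hx l]
        refine Submodule.span_le.mpr ?_
        rw [Set.singleton_subset_iff]
        exact hxl
      have : c (l + 1) = c l := le_antisymm (hdesc l) hle
      rw [this, ih]
  · -- easy direction
    intro h c hcyc hdesc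
    exact h (⨁ _ : ℕ, M) (fun n => dsAnnOpen n) c hcyc hdesc
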